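/- Let M be an n × n real Metzler matrix and let p : [0,∞) → ℝⁿ be a differentiable function satisfying p′(t) ≤ M p(t) entrywise for all t ≥ 0. Then for all t ≥ 0, p(t) ≤ exp(tM) p(0) entrywise, where exp(tM) denotes the matrix exponential of tM. -/

import Mathlib

/-!
Shifting a Metzler matrix by a multiple of the identity makes it entrywise nonnegative, and
`exp` of a nonnegative matrix is nonnegative term by term; since the identity commutes with
everything, `exp (s • M)` is entrywise nonnegative for `s ≥ 0`. Fix `T ≥ 0`. Then
`v t = (exp ((T - t) • M) *ᵥ p t) i` has derivative `(exp ((T - t) • M) *ᵥ (p' t - M *ᵥ p t)) i`,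
a nonnegative matrix applied to a nonpositive vector, so `v` decreases on `[0, T]` from
`(exp (T • M) *ᵥ p 0) i` to `p T i`.
-/

open NormedSpace Matrix Set

namespace Matrix

variable {ι : Type*} [Fintype ι] [DecidableEq ι]

theorem exp_apply_nonneg_of_nonneg {A : Matrix ι ι ℝ} (hA : ∀ i j, 0 ≤ A i j) (i j : ι) :
    0 ≤ exp A i j := by
  -- `Matrix` has no order instance; as a function type it has the entrywise one
  have hexp : (0 : ι → ι → ℝ) ≤ exp A := by
    rw [exp_eq_tsum_rat]
    refine tsum_nonneg (α := ι → ι → ℝ) fun k a b => ?_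
    simp only [smul_apply]
    exact mul_nonneg (by positivity) (pow_apply_nonneg hA k a b)
  exact hexp i j

theorem exp_eq_exp_neg_smul_exp_add_smul_one (A : Matrix ι ι ℝ) (c : ℝ) :
    exp A = Real.exp (-c) • exp (A + c • 1) := by
  have hcomm : Commute (A + c • 1) ((-c) • 1) := (Commute.one_right _).smul_right _
  calc exp A = exp ((A + c • 1) + (-c) • 1) := by rw [neg_smul, add_neg_cancel_right]
    _ = Real.exp (-c) • exp (A + c • 1) := by
      rw [exp_add_of_commute _ _ hcomm, smul_one_eq_diagonal (-c), exp_diagonal]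
      ext i j
      simp [mul_diagonal, Real.exp_eq_exp_ℝ, mul_comm]

theorem exp_apply_nonneg_of_offDiag_nonneg {A : Matrix ι ι ℝ}
    (hA : ∀ i j, i ≠ j → 0 ≤ A i j) (i j : ι) : 0 ≤ exp A i j := by
  obtain ⟨c, hc⟩ := Finite.exists_le fun k => -A k k
  rw [exp_eq_exp_neg_smul_exp_add_smul_one A c, smul_apply, smul_eq_mul]
  refine mul_nonneg (Real.exp_pos _).le (exp_apply_nonneg_of_nonneg (fun k l => ?_) i j)
  by_cases hkl : k = l
  · subst hkl
    simpa [add_comm] using neg_le_iff_add_nonneg.mp (hc k)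
  · simpa [hkl] using hA k l hkl

theorem mulVec_apply_nonpos {m n : Type*} [Fintype n] {A : Matrix m n ℝ} {w : n → ℝ}
    (hA : ∀ i j, 0 ≤ A i j) (hw : ∀ j, w j ≤ 0) (i : m) : (A *ᵥ w) i ≤ 0 :=
  Finset.sum_nonpos fun j _ => mul_nonpos_of_nonneg_of_nonpos (hA i j) (hw j)

theorem hasDerivAt_exp_sub_smul_apply (M : Matrix ι ι ℝ) (T t : ℝ) (i j : ι) :
    HasDerivAt (fun s => exp ((T - s) • M) i j) ((-(exp ((T - t) • M) * M)) i j) t := by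
  let _ : NormedRing (Matrix ι ι ℝ) := Matrix.linftyOpNormedRing
  let _ : NormedAlgebra ℝ (Matrix ι ι ℝ) := Matrix.linftyOpNormedAlgebra
  have hE := (hasDerivAt_exp_smul_const M (T - t)).scomp t ((hasDerivAt_id t).const_sub T)
  rw [neg_one_smul] at hE
  exact (entryLinearMap ℝ ℝ i j).toContinuousLinearMap.hasFDerivAt.comp_hasDerivAt t hE

end Matrix

theorem antitoneOn_Icc_of_hasDerivWithinAt_nonpos {f f' : ℝ → ℝ} {a b : ℝ} {s : Set ℝ}
    (hs : Icc a b ⊆ s) (hf : ∀ x ∈ Icc a b, HasDerivWithinAt f (f' x) s x)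
    (hf' : ∀ x ∈ Ioo a b, f' x ≤ 0) : AntitoneOn f (Icc a b) := by
  have hint : interior (Icc a b) ⊆ Icc a b := interior_subset
  refine antitoneOn_of_hasDerivWithinAt_nonpos (convex_Icc a b)
    (fun x hx => (hf x hx).continuousWithinAt.mono hs)
    (fun x hx => (hf x (hint hx)).mono (hint.trans hs)) (fun x hx => hf' x ?_)
  rwa [interior_Icc] at hx

theorem HasDerivWithinAt.mulVec_apply {𝕜 m n : Type*} [NontriviallyNormedField 𝕜] [Fintype n]
    {E : 𝕜 → Matrix m n 𝕜} {E' : Matrix m n 𝕜} {q : 𝕜 → n → 𝕜} {q' : n → 𝕜} {s : Set 𝕜} {t : 𝕜}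
    (hE : ∀ i j, HasDerivWithinAt (fun u => E u i j) (E' i j) s t)
    (hq : ∀ j, HasDerivWithinAt (fun u => q u j) (q' j) s t) (i : m) :
    HasDerivWithinAt (fun u => (E u *ᵥ q u) i) ((E' *ᵥ q t + E t *ᵥ q') i) s t := by
  simp only [mulVec, dotProduct, Pi.add_apply, ← Finset.sum_add_distrib]
  exact HasDerivWithinAt.fun_sum fun j _ => (hE i j).mul (hq j)

/-- If `M` is an `n × n` real Metzler matrix and `p : [0,∞) → ℝⁿ` is differentiable with
`p'(t) ≤ M p(t)` entrywise for all `t ≥ 0`, then `p(t) ≤ exp(tM) p(0)` entrywise for all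
`t ≥ 0`, where `exp(tM)` is the matrix exponential (`NormedSpace.exp (t • M)`). -/
theorem comparison_principle_metzler {n : ℕ} (M : Matrix (Fin n) (Fin n) ℝ)
    (hMetzler : ∀ i j : Fin n, i ≠ j → 0 ≤ M i j)
    (p p' : ℝ → Fin n → ℝ)
    (hderiv : ∀ t : ℝ, 0 ≤ t → ∀ i : Fin n,
      HasDerivWithinAt (fun s => p s i) (p' t i) (Set.Ici 0) t)
    (hineq : ∀ t : ℝ, 0 ≤ t → ∀ i : Fin n, p' t i ≤ M.mulVec (p t) i) :
    ∀ t : ℝ, 0 ≤ t → ∀ i : Fin n,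
      p t i ≤ (NormedSpace.exp (t • M)).mulVec (p 0) i := by
  intro T hT i
  set E : ℝ → Matrix (Fin n) (Fin n) ℝ := fun t => exp ((T - t) • M)
  set v' : ℝ → ℝ := fun t => ((-(E t * M)) *ᵥ p t + E t *ᵥ p' t) i
  have hv : ∀ t ∈ Icc 0 T, HasDerivWithinAt (fun t => (E t *ᵥ p t) i) (v' t) (Ici 0) t :=
    fun t ht => HasDerivWithinAt.mulVec_apply
      (fun a b => (hasDerivAt_exp_sub_smul_apply M T t a b).hasDerivWithinAt) (hderiv t ht.1) i
  have hv'_nonpos : ∀ t ∈ Ioo 0 T, v' t ≤ 0 := by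
    intro t ht
    have hv' : v' t = (E t *ᵥ (p' t - M *ᵥ p t)) i := by
      simp only [v', neg_mulVec, ← mulVec_mulVec, mulVec_sub, Pi.add_apply, Pi.sub_apply,
        Pi.neg_apply]
      ring
    rw [hv']
    refine mulVec_apply_nonpos (exp_apply_nonneg_of_offDiag_nonneg fun a b hab => ?_)
      (fun j => sub_nonpos.mpr (hineq t ht.1.le j)) i
    exact mul_nonneg (sub_nonneg.mpr ht.2.le) (hMetzler a b hab)
  have hanti := antitoneOn_Icc_of_hasDerivWithinAt_nonpos Icc_subset_Ici_self hv hv'_nonpos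
  simpa [E] using hanti (left_mem_Icc.mpr hT) (right_mem_Icc.mpr hT) hT
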